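/- arXiv:hep-th/9212094 — 2 statements merged into one kernel-verified Lean document; each statement's English description precedes it below -/
import Mathlib

section
/- Let n > 1 and define δ_j = sin²(π/(2n+1))/sin²(π(j+1)/(2n+1)). Then the sum ∑_{i,j=1}^{n-1} min(i,j)·log(1-δ_i)·log(1-δ_j) equals (1/2)·∑_{j=1}^{n-1} log δ_j · log(1-δ_j). -/
/-!
Put `a k = log (sin (π k / (2n+1)))` and `b k = a (k+1) - a k`. The identity
`sin² x - sin² y = sin (x+y) sin (x-y)` gives `log (1 - δ_j) = b (j+1) - b j` and
`log δ_j = -2 (b 1 + ⋯ + b j)`, while `sin ((n+1)π/(2n+1)) = sin (nπ/(2n+1))` gives `b n = 0`.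
Writing `min i j` as the number of `k ≥ 1` with `k ≤ i` and `k ≤ j` turns the left side
into `∑ k, (b n - b k)² = ∑ k, b k²`, and summation by parts turns the right side into the
same sum.
-/

open Real

/-- `δ_j = sin²(π/(2n+1))/sin²(π(j+1)/(2n+1))`. -/
noncomputable def del (n j : ℕ) : ℝ :=
  Real.sin (π / (2 * n + 1)) ^ 2 / Real.sin (π * (j + 1) / (2 * n + 1)) ^ 2

open Finset

theorem sum_sum_min_mul_mul_eq_sum_sq (m : ℕ) (x : ℕ → ℝ) :
    ∑ i ∈ Icc 1 m, ∑ j ∈ Icc 1 m, (min i j : ℝ) * x i * x j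
      = ∑ k ∈ Icc 1 m, (∑ i ∈ Icc k m, x i) ^ 2 := by
  have hmin : ∀ i ∈ Icc 1 m, ∀ j ∈ Icc 1 m,
      (min i j : ℝ) = ∑ k ∈ Icc 1 m, if k ≤ i ∧ k ≤ j then 1 else 0 := by
    intro i hi j hj
    have hfilter : (Icc 1 m).filter (fun k => k ≤ i ∧ k ≤ j) = Icc 1 (min i j) := by
      ext k; simp only [mem_filter, mem_Icc] at hi hj ⊢; omega
    rw [sum_boole, hfilter, Nat.card_Icc, Nat.add_sub_cancel, Nat.cast_min]
  have htail : ∀ k ∈ Icc 1 m, (Icc 1 m).filter (k ≤ ·) = Icc k m := by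
    intro k hk; ext i; simp only [mem_filter, mem_Icc] at hk ⊢; omega
  calc _ = ∑ i ∈ Icc 1 m, ∑ j ∈ Icc 1 m, ∑ k ∈ Icc 1 m,
          if k ≤ i then (if k ≤ j then x i * x j else 0) else 0 := by
        refine sum_congr rfl fun i hi => sum_congr rfl fun j hj => ?_
        rw [hmin i hi j hj, sum_mul, sum_mul]
        refine sum_congr rfl fun k _ => ?_
        split_ifs <;> simp_all
    _ = ∑ k ∈ Icc 1 m, ∑ i ∈ Icc 1 m, ∑ j ∈ Icc 1 m,
          if k ≤ i then (if k ≤ j then x i * x j else 0) else 0 :=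
        (sum_congr rfl fun _ _ => sum_comm).trans sum_comm
    _ = _ := by
        refine sum_congr rfl fun k hk => ?_
        rw [← htail k hk, sq, sum_mul_sum, sum_filter]
        refine sum_congr rfl fun i _ => ?_
        rw [sum_filter]
        split_ifs <;> simp

theorem sum_sum_min_mul_sub_mul_sub {b : ℕ → ℝ} {m : ℕ} (hb : b (m + 1) = 0) :
    ∑ i ∈ Icc 1 m, ∑ j ∈ Icc 1 m, (min i j : ℝ) * (b (i + 1) - b i) * (b (j + 1) - b j)
      = ∑ k ∈ Icc 1 m, b k ^ 2 := by
  rw [sum_sum_min_mul_mul_eq_sum_sq]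
  refine sum_congr rfl fun k hk => ?_
  rw [sum_Icc_sub (mem_Icc.1 hk).2, hb, zero_sub, neg_sq]

theorem sum_sum_Icc_mul_sub (b : ℕ → ℝ) (m : ℕ) :
    ∑ j ∈ Icc 1 m, (∑ k ∈ Icc 1 j, b k) * (b (j + 1) - b j)
      = (∑ k ∈ Icc 1 m, b k) * b (m + 1) - ∑ k ∈ Icc 1 m, b k ^ 2 := by
  induction m with
  | zero => simp
  | succ m ih =>
    rw [sum_Icc_succ_top (by omega), ih, sum_Icc_succ_top (by omega), sum_Icc_succ_top (by omega)]
    ring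

theorem sin_add_mul_sin_sub (x y : ℝ) :
    Real.sin (x + y) * Real.sin (x - y) = Real.sin x ^ 2 - Real.sin y ^ 2 := by
  rw [Real.sin_add, Real.sin_sub]
  nlinarith [Real.sin_sq_add_cos_sq x, Real.sin_sq_add_cos_sq y]

theorem sin_pi_mul_div_pos {k N : ℕ} (hk : 0 < k) (hkN : k < N) :
    0 < Real.sin (π * k / N) := by
  have hN : (0 : ℝ) < N := by exact_mod_cast hk.trans hkN
  apply Real.sin_pos_of_pos_of_lt_pi (by positivity)
  rw [div_lt_iff₀ hN, mul_lt_mul_iff_right₀ pi_pos]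
  exact_mod_cast hkN

noncomputable def logSin (n k : ℕ) : ℝ := Real.log (Real.sin (π * k / (2 * n + 1)))

theorem logSin_succ_self (n : ℕ) : logSin n (n + 1) = logSin n n := by
  have : π * ((n + 1 : ℕ) : ℝ) / (2 * n + 1) = π - π * n / (2 * n + 1) := by
    field_simp; push_cast; ring
  rw [logSin, logSin, this, Real.sin_pi_sub]

theorem log_del {n j : ℕ} (hj : j + 1 ≤ 2 * n) :
    Real.log (del n j) = 2 * (logSin n 1 - logSin n (j + 1)) := by
  have h1 := sin_pi_mul_div_pos (k := 1) (N := 2 * n + 1) one_pos (by omega)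
  have hj1 := sin_pi_mul_div_pos (k := j + 1) (N := 2 * n + 1) (by omega) (by omega)
  push_cast at h1 hj1
  rw [mul_one] at h1
  rw [del, Real.log_div (by positivity) (by positivity), Real.log_pow, Real.log_pow, logSin,
    logSin]
  push_cast
  ring_nf

theorem log_one_sub_del {n j : ℕ} (hj0 : 0 < j) (hj : j + 2 ≤ 2 * n) :
    Real.log (1 - del n j)
      = (logSin n (j + 2) - logSin n (j + 1)) - (logSin n (j + 1) - logSin n j) := by
  have h0 := sin_pi_mul_div_pos (k := j) (N := 2 * n + 1) hj0 (by omega)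
  have h1 := sin_pi_mul_div_pos (k := j + 1) (N := 2 * n + 1) (by omega) (by omega)
  have h2 := sin_pi_mul_div_pos (k := j + 2) (N := 2 * n + 1) (by omega) (by omega)
  push_cast at h0 h1 h2
  set N : ℝ := 2 * n + 1 with hN
  have hfactor : 1 - del n j
      = Real.sin (π * (j + 2) / N) * Real.sin (π * j / N) / Real.sin (π * (j + 1) / N) ^ 2 := by
    have := sin_add_mul_sin_sub (π * (j + 1) / N) (π / N)
    rw [show π * (j + 1) / N + π / N = π * (j + 2) / N by ring,
      show π * (j + 1) / N - π / N = π * j / N by ring] at this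
    rw [del, ← hN, this]
    field_simp
  rw [hfactor, Real.log_div (by positivity) (by positivity), Real.log_mul h2.ne' h0.ne',
    Real.log_pow, logSin, logSin, logSin]
  push_cast
  ring

theorem del_log_sum_identity (n : ℕ) (hn : 1 < n) :
    ∑ i ∈ Finset.Icc 1 (n - 1), ∑ j ∈ Finset.Icc 1 (n - 1),
        (min i j : ℝ) * Real.log (1 - del n i) * Real.log (1 - del n j)
      = (1/2) * ∑ j ∈ Finset.Icc 1 (n - 1), Real.log (del n j) * Real.log (1 - del n j) := by
  set b : ℕ → ℝ := fun k => logSin n (k + 1) - logSin n k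
  have hb : b (n - 1 + 1) = 0 := by simp [b, Nat.sub_add_cancel hn.le, logSin_succ_self]
  have hlog_one_sub : ∀ j ∈ Icc 1 (n - 1), Real.log (1 - del n j) = b (j + 1) - b j := by
    intro j hj
    rw [mem_Icc] at hj
    exact log_one_sub_del hj.1 (by omega)
  have hlog : ∀ j ∈ Icc 1 (n - 1), Real.log (del n j) = -2 * ∑ k ∈ Icc 1 j, b k := by
    intro j hj
    rw [mem_Icc] at hj
    rw [log_del (by omega), sum_Icc_sub hj.1]
    ring
  calc _ = ∑ i ∈ Icc 1 (n - 1), ∑ j ∈ Icc 1 (n - 1),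
          (min i j : ℝ) * (b (i + 1) - b i) * (b (j + 1) - b j) :=
        sum_congr rfl fun i hi => sum_congr rfl fun j hj => by
          rw [hlog_one_sub i hi, hlog_one_sub j hj]
    _ = -∑ j ∈ Icc 1 (n - 1), (∑ k ∈ Icc 1 j, b k) * (b (j + 1) - b j) := by
        rw [sum_sum_min_mul_sub_mul_sub hb, sum_sum_Icc_mul_sub, hb]
        ring
    _ = _ := by
        rw [mul_sum, ← sum_neg_distrib]
        refine sum_congr rfl fun j hj => ?_
        rw [hlog j hj, hlog_one_sub j hj]
        ring
end

section
/- Define A_k(t) by A_1(t)=1 and A_k(t)=1-t/A_{k-1}(t). Fix n>1 and let δ_1 = sin²(π/(2n+1))/sin²(2π/(2n+1)). Then δ_1 = A_n(δ_1)², and consequently x_n(δ_1) = 1 where x_n(t) = t/A_n(t)². -/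
/-!
Put `θ = π / (2n + 1)` and `s_k = sin (k θ)`. Then `δ₁ = 1 / (4 cos² θ)`, and since
`s_{k+2} = 2 cos θ · s_{k+1} - s_k`, the continued fraction evaluated at `1 / (4 cos² θ)` is the
ratio `A_k = s_{k+1} / (2 cos θ · s_k)`. The symmetry `s_{n+1} = sin (π - n θ) = s_n` gives
`A_n = 1 / (2 cos θ)`, whose square is `δ₁`.
-/

open Real

/-- The continued-fraction recursion `A_1(t) = 1`, `A_k(t) = 1 - t/A_{k-1}(t)`. -/
noncomputable def contA : ℕ → ℝ → ℝ
  | 0, _ => 1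
  | 1, _ => 1
  | (k + 2), t => 1 - t / contA (k + 1) t

theorem contA_add_two (k : ℕ) (t : ℝ) : contA (k + 2) t = 1 - t / contA (k + 1) t := rfl

theorem contA_inv_four_mul_cos_sq {θ : ℝ} (hc : cos θ ≠ 0) {k : ℕ} (hk : 1 ≤ k)
    (hs : ∀ j, 1 ≤ j → j ≤ k → sin (j * θ) ≠ 0) :
    contA k (4 * cos θ ^ 2)⁻¹ = sin ((k + 1) * θ) / (2 * cos θ * sin (k * θ)) := by
  induction k, hk using Nat.le_induction with
  | base =>
    have h1 : sin θ ≠ 0 := by simpa using hs 1 le_rfl le_rfl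
    simp only [contA, Nat.cast_one, one_mul, one_add_one_eq_two, sin_two_mul]
    field_simp
  | succ k hk ih =>
    obtain ⟨j, rfl⟩ := Nat.exists_eq_add_of_le' hk
    have hj := hs (j + 1) (by omega) (by omega)
    have hj' := hs (j + 2) (by omega) le_rfl
    have hrec : sin ((j + 3 : ℝ) * θ) = 2 * cos θ * sin ((j + 2 : ℝ) * θ) - sin ((j + 1 : ℝ) * θ) := by
      have := two_mul_sin_mul_cos ((j + 2 : ℝ) * θ) θ
      rw [show (j + 2 : ℝ) * θ - θ = (j + 1) * θ by ring,
        show (j + 2 : ℝ) * θ + θ = (j + 3) * θ by ring] at this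
      linarith
    rw [contA_add_two, ih fun i hi hik => hs i hi (by omega)]
    push_cast at hj hj' ⊢
    rw [show ((j : ℝ) + 1 + 1 + 1) * θ = (j + 3) * θ by ring,
      show ((j : ℝ) + 1 + 1) * θ = (j + 2) * θ by ring, hrec]
    field_simp
    ring

theorem sin_sq_div_sin_two_mul_sq {θ : ℝ} (hs : sin θ ≠ 0) :
    sin θ ^ 2 / sin (2 * θ) ^ 2 = (4 * cos θ ^ 2)⁻¹ := by
  rw [sin_two_mul]
  field_simp
  ring

theorem sin_nat_mul_pi_div_pos {j m : ℕ} (hj : 0 < j) (hjm : j < m) :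
    0 < sin (j * (π / m)) := by
  have hm : (0 : ℝ) < m := by exact_mod_cast hj.trans hjm
  apply sin_pos_of_pos_of_lt_pi (by positivity)
  rw [← mul_div_assoc, div_lt_iff₀ hm, mul_comm]
  exact mul_lt_mul_of_pos_left (by exact_mod_cast hjm) pi_pos

theorem delta_one_fixed_point (n : ℕ) (hn : 1 < n) :
    Real.sin (π / (2 * n + 1)) ^ 2 / Real.sin (2 * π / (2 * n + 1)) ^ 2
        = (contA n (Real.sin (π / (2 * n + 1)) ^ 2 / Real.sin (2 * π / (2 * n + 1)) ^ 2)) ^ 2 ∧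
      (Real.sin (π / (2 * n + 1)) ^ 2 / Real.sin (2 * π / (2 * n + 1)) ^ 2) /
          (contA n (Real.sin (π / (2 * n + 1)) ^ 2 / Real.sin (2 * π / (2 * n + 1)) ^ 2)) ^ 2
        = 1 := by
  set θ : ℝ := π / (2 * n + 1) with hθ
  have hsin_pos : ∀ j, 1 ≤ j → j ≤ 2 * n → 0 < sin (j * θ) := fun j hj hjn => by
    simpa using sin_nat_mul_pi_div_pos (m := 2 * n + 1) hj (by omega)
  have hs1 : sin θ ≠ 0 := by simpa using (hsin_pos 1 le_rfl (by omega)).ne'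
  have hc : cos θ ≠ 0 := fun h => (hsin_pos 2 (by omega) (by omega)).ne' (by
    rw [Nat.cast_two, sin_two_mul, h, mul_zero])
  have hsymm : sin ((n + 1) * θ) = sin (n * θ) := by
    rw [← sin_pi_sub]
    congr 1
    rw [hθ]
    field_simp
    ring
  have hδ : sin θ ^ 2 / sin (2 * π / (2 * n + 1)) ^ 2 = (4 * cos θ ^ 2)⁻¹ := by
    rw [mul_div_assoc, ← hθ, sin_sq_div_sin_two_mul_sq hs1]
  have hA : contA n (4 * cos θ ^ 2)⁻¹ = (2 * cos θ)⁻¹ := by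
    have hsn := (hsin_pos n (by omega) (by omega)).ne'
    rw [contA_inv_four_mul_cos_sq hc (by omega) fun j hj hjn => (hsin_pos j hj (by omega)).ne',
      hsymm]
    field_simp
  have hfix : (4 * cos θ ^ 2)⁻¹ = (contA n (4 * cos θ ^ 2)⁻¹) ^ 2 := by
    rw [hA, inv_pow, mul_pow]
    norm_num
  rw [hδ, ← hfix]
  exact ⟨rfl, div_self (by positivity)⟩
end
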